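/- Let (L, Δ, δ_L, α) be a Hom-AssCoDer pair over K. Define the commutator cobracket Δ_C = Δ − τ∘Δ : L → L ⊗ L. Then (L, Δ_C, δ_L, α) is a Hom-Lie CoDer pair; in particular δ_L is an α-coderivation with respect to Δ_C: Δ_C∘δ_L = (δ_L ⊗ α)∘Δ_C + (α ⊗ δ_L)∘Δ_C. -/
import Mathlib


open scoped TensorProduct

/-- The cyclic permutation ξ : x⊗y⊗z ↦ y⊗z⊗x on `L ⊗ (L ⊗ L)`. -/
noncomputable def cyc (K : Type*) [Field K] (L : Type*) [AddCommGroup L] [Module K L] :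
    L ⊗[K] (L ⊗[K] L) →ₗ[K] L ⊗[K] (L ⊗[K] L) :=
  (TensorProduct.assoc K L L L).toLinearMap ∘ₗ (TensorProduct.comm K L (L ⊗[K] L)).toLinearMap

/-- A Hom-coassociative coalgebra: (α ⊗ Δ)∘Δ = (Δ ⊗ α)∘Δ, identifying
(L ⊗ L) ⊗ L ≅ L ⊗ (L ⊗ L) via the associator. -/
def IsHomCoassociative {K : Type*} [Field K] {L : Type*} [AddCommGroup L] [Module K L]
    (Δ : L →ₗ[K] L ⊗[K] L) (α : L →ₗ[K] L) : Prop :=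
  TensorProduct.map α Δ ∘ₗ Δ =
    (TensorProduct.assoc K L L L).toLinearMap ∘ₗ TensorProduct.map Δ α ∘ₗ Δ

/-- φ is an α-coderivation of Δ. -/
def IsCoderivation {K : Type*} [Field K] {L : Type*} [AddCommGroup L] [Module K L]
    (Δ : L →ₗ[K] L ⊗[K] L) (α φ : L →ₗ[K] L) : Prop :=
  Δ ∘ₗ φ = TensorProduct.map φ α ∘ₗ Δ + TensorProduct.map α φ ∘ₗ Δ

/-- A Hom-Lie coalgebra: Δ' = −τ∘Δ' and (1 + ξ + ξ²)∘(α ⊗ Δ')∘Δ' = 0. -/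
def IsHomLieCoalgebra {K : Type*} [Field K] {L : Type*} [AddCommGroup L] [Module K L]
    (Δ : L →ₗ[K] L ⊗[K] L) (α : L →ₗ[K] L) : Prop :=
  ((TensorProduct.comm K L L).toLinearMap ∘ₗ Δ = -Δ) ∧
  ((LinearMap.id + cyc K L + cyc K L ∘ₗ cyc K L) ∘ₗ (TensorProduct.map α Δ ∘ₗ Δ) = 0)

/-- A Hom-Lie CoDer pair (L, Δ, φ, α). -/
def IsHomLieCoDerPair {K : Type*} [Field K] {L : Type*} [AddCommGroup L] [Module K L]
    (Δ : L →ₗ[K] L ⊗[K] L) (φ α : L →ₗ[K] L) : Prop :=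
  IsHomLieCoalgebra Δ α ∧ IsCoderivation Δ α φ

section Aux
variable {K : Type*} [Field K] {L : Type*} [AddCommGroup L] [Module K L]

lemma ext_triple {M : Type*} [AddCommGroup M] [Module K M]
    (f g : L ⊗[K] (L ⊗[K] L) →ₗ[K] M)
    (h : ∀ x y z : L, f (x ⊗ₜ (y ⊗ₜ z)) = g (x ⊗ₜ (y ⊗ₜ z))) : f = g := by
  apply TensorProduct.ext'
  intro x t
  induction t using TensorProduct.induction_on with
  | zero => simp
  | tmul y z => exact h x y z
  | add a b ha hb => simp only [TensorProduct.tmul_add, map_add, ha, hb]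

lemma tau_tau : (TensorProduct.comm K L L).toLinearMap ∘ₗ (TensorProduct.comm K L L).toLinearMap
    = (LinearMap.id : L ⊗[K] L →ₗ[K] L ⊗[K] L) := by
  apply TensorProduct.ext'; intro x y; simp

lemma comm_map (f g : L →ₗ[K] L) :
    (TensorProduct.comm K L L).toLinearMap ∘ₗ TensorProduct.map f g
      = TensorProduct.map g f ∘ₗ (TensorProduct.comm K L L).toLinearMap := by
  apply TensorProduct.ext'; intro x y; simp

lemma map_sub_right (f : L →ₗ[K] L) (g h : L →ₗ[K] L ⊗[K] L) :
    TensorProduct.map f (g - h) = TensorProduct.map f g - TensorProduct.map f h := by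
  apply TensorProduct.ext'; intro x y
  simp [TensorProduct.tmul_sub]

lemma cyc2_assoc :
    cyc K L ∘ₗ cyc K L ∘ₗ (TensorProduct.assoc K L L L).toLinearMap
      = (TensorProduct.comm K (L ⊗[K] L) L).toLinearMap := by
  apply TensorProduct.ext_threefold; intro x y z
  simp [cyc]

lemma map_comp_comm (f : L →ₗ[K] L) (g : L →ₗ[K] L ⊗[K] L) :
    TensorProduct.map f g ∘ₗ (TensorProduct.comm K L L).toLinearMap
      = (TensorProduct.comm K (L ⊗[K] L) L).toLinearMap ∘ₗ TensorProduct.map g f := by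
  apply TensorProduct.ext'; intro x y; simp

lemma perm_zero :
    (LinearMap.id + cyc K L + cyc K L ∘ₗ cyc K L) ∘ₗ
      (LinearMap.id - cyc K L ∘ₗ cyc K L
        - TensorProduct.map LinearMap.id (TensorProduct.comm K L L).toLinearMap
        + TensorProduct.map LinearMap.id (TensorProduct.comm K L L).toLinearMap
            ∘ₗ (cyc K L ∘ₗ cyc K L)) = 0 := by
  apply ext_triple; intro x y z
  simp [cyc, TensorProduct.tmul_sub, TensorProduct.sub_tmul]
  abel

end Aux

/-- If (L, Δ, δ_L, α) is a Hom-AssCoDer pair, then the commutator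
Δ_C = Δ − τ∘Δ makes (L, Δ_C, δ_L, α) a Hom-Lie CoDer pair; in particular δ_L is an
α-coderivation of Δ_C. -/
theorem homAssCoDerPair_commutator
    {K : Type*} [Field K] [CharZero K] {L : Type*} [AddCommGroup L] [Module K L]
    (Δ : L →ₗ[K] L ⊗[K] L) (δL α : L →ₗ[K] L)
    (hcoass : IsHomCoassociative Δ α)
    (hcoder : IsCoderivation Δ α δL) :
    IsHomLieCoDerPair (Δ - (TensorProduct.comm K L L).toLinearMap ∘ₗ Δ) δL α ∧
    ((Δ - (TensorProduct.comm K L L).toLinearMap ∘ₗ Δ) ∘ₗ δL =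
      TensorProduct.map δL α ∘ₗ (Δ - (TensorProduct.comm K L L).toLinearMap ∘ₗ Δ)
        + TensorProduct.map α δL ∘ₗ (Δ - (TensorProduct.comm K L L).toLinearMap ∘ₗ Δ)) := by
  -- abbreviations
  have hanti : (TensorProduct.comm K L L).toLinearMap
      ∘ₗ (Δ - (TensorProduct.comm K L L).toLinearMap ∘ₗ Δ)
      = -(Δ - (TensorProduct.comm K L L).toLinearMap ∘ₗ Δ) := by
    rw [LinearMap.comp_sub, ← LinearMap.comp_assoc, tau_tau, LinearMap.id_comp]
    abel
  -- coderivation of the commutator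
  have hcoderC : (Δ - (TensorProduct.comm K L L).toLinearMap ∘ₗ Δ) ∘ₗ δL =
      TensorProduct.map δL α ∘ₗ (Δ - (TensorProduct.comm K L L).toLinearMap ∘ₗ Δ)
        + TensorProduct.map α δL ∘ₗ (Δ - (TensorProduct.comm K L L).toLinearMap ∘ₗ Δ) := by
    rw [LinearMap.sub_comp, LinearMap.comp_assoc, hcoder]
    simp only [LinearMap.comp_add, LinearMap.comp_sub, ← LinearMap.comp_assoc, comm_map]
    simp only [LinearMap.comp_assoc]
    abel
  -- co-Jacobi
  have hmap : TensorProduct.map α (Δ - (TensorProduct.comm K L L).toLinearMap ∘ₗ Δ)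
      = TensorProduct.map α Δ
        - TensorProduct.map LinearMap.id (TensorProduct.comm K L L).toLinearMap
            ∘ₗ TensorProduct.map α Δ := by
    rw [map_sub_right, ← TensorProduct.map_comp, LinearMap.id_comp]
  have hE : TensorProduct.map α Δ ∘ₗ ((TensorProduct.comm K L L).toLinearMap ∘ₗ Δ)
      = cyc K L ∘ₗ (cyc K L ∘ₗ (TensorProduct.map α Δ ∘ₗ Δ)) := by
    rw [← LinearMap.comp_assoc, map_comp_comm, ← cyc2_assoc, hcoass]
    simp only [LinearMap.comp_assoc]
  have hX : TensorProduct.map α (Δ - (TensorProduct.comm K L L).toLinearMap ∘ₗ Δ)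
        ∘ₗ (Δ - (TensorProduct.comm K L L).toLinearMap ∘ₗ Δ)
      = (LinearMap.id - cyc K L ∘ₗ cyc K L
          - TensorProduct.map LinearMap.id (TensorProduct.comm K L L).toLinearMap
          + TensorProduct.map LinearMap.id (TensorProduct.comm K L L).toLinearMap
              ∘ₗ (cyc K L ∘ₗ cyc K L))
        ∘ₗ (TensorProduct.map α Δ ∘ₗ Δ) := by
    rw [hmap]
    simp only [LinearMap.sub_comp, LinearMap.comp_sub, LinearMap.add_comp,
      LinearMap.id_comp, LinearMap.comp_assoc]
    rw [hE]
    abel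
  have hjac : (LinearMap.id + cyc K L + cyc K L ∘ₗ cyc K L) ∘ₗ
      (TensorProduct.map α (Δ - (TensorProduct.comm K L L).toLinearMap ∘ₗ Δ)
        ∘ₗ (Δ - (TensorProduct.comm K L L).toLinearMap ∘ₗ Δ)) = 0 := by
    rw [hX, ← LinearMap.comp_assoc, perm_zero, LinearMap.zero_comp]
  exact ⟨⟨⟨hanti, hjac⟩, hcoderC⟩, hcoderC⟩
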